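/- arXiv:0912.1922 — 4 statements merged into one kernel-verified Lean document; each statement's English description precedes it below -/
import Mathlib

section
/- Let π be a set of primes, G a finite group, A a normal subgroup of G, and M a subgroup of G containing A such that the order of M/A is a π-number. Then there exists a subgroup H of G whose order is a π-number and such that HA = M. -/
/-!
Among the subgroups `H` with `H ⊔ A = M` take a minimal one. If a prime `p ∉ π` divided `|H|`,
then, since `[H : H ⊓ A] = [M : A]` is a `π`-number, `p` divides `|H ⊓ A|` but not its index
in `H`. A Sylow `p`-subgroup `P` of `H` then lies in `H ⊓ A`, and either its normalizer is
proper in `H` and supplements `H ⊓ A` by the Frattini argument, or `P` is normal in `H` and a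
Schur–Zassenhaus complement of `P` is a proper supplement. Either way `H` was not minimal.
-/

/-- `n` is a `π`-number: every prime dividing `n` lies in `π`. -/
def IsPiNumber (π : Set ℕ) (n : ℕ) : Prop :=
  ∀ p : ℕ, p.Prime → p ∣ n → p ∈ π

/-- `H` is a `π`-Hall subgroup of `G`: its order is a `π`-number and no prime
in `π` divides its index. -/
def IsHallPi (π : Set ℕ) {G : Type*} [Group G] (H : Subgroup G) : Prop :=
  IsPiNumber π (Nat.card H) ∧ ∀ p ∈ π, p.Prime → ¬ p ∣ H.index

/-- The conjugate `g K g⁻¹` of a subgroup `K`. -/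
def conjSub {G : Type*} [Group G] (g : G) (K : Subgroup G) : Subgroup G :=
  K.map (MulAut.conj g).toMonoidHom

section

open Subgroup

variable {G : Type*} [Group G] {p : ℕ} [Fact p.Prime]

theorem Sylow.le_of_not_dvd_index [Finite G] (P : Sylow p G) {N : Subgroup G} [N.Normal]
    (hN : ¬ p ∣ N.index) : (P : Subgroup G) ≤ N := by
  obtain ⟨k, hk⟩ := IsPGroup.iff_card.mp P.2
  have hcop : (Nat.card P).Coprime N.index :=
    hk ▸ (Nat.Prime.coprime_pow_of_not_dvd Fact.out hN).symm
  rw [← relIndex_eq_one]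
  exact Nat.eq_one_of_dvd_coprimes hcop (N.relIndex_dvd_card P)
    (N.relIndex_dvd_index_of_normal P)

theorem exists_ne_top_sup_eq_top_of_prime_dvd_card [Finite G] {N : Subgroup G} [N.Normal]
    (hpN : p ∣ Nat.card N) (hpi : ¬ p ∣ N.index) : ∃ K : Subgroup G, K ≠ ⊤ ∧ K ⊔ N = ⊤ := by
  obtain ⟨P⟩ : Nonempty (Sylow p G) := inferInstance
  have hPN : (P : Subgroup G) ≤ N := P.le_of_not_dvd_index hpi
  by_cases hnorm : normalizer (P : Set G) = ⊤
  · have : (P : Subgroup G).Normal := normalizer_eq_top_iff.mp hnorm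
    obtain ⟨K, hK⟩ := exists_right_complement'_of_coprime P.card_coprime_index
    refine ⟨K, fun hKtop => ?_, top_le_iff.mp ?_⟩
    · exact P.ne_bot_of_dvd_card (hpN.trans (card_subgroup_dvd_card N))
        (isComplement'_top_right.mp (hKtop ▸ hK))
    · rw [← hK.sup_eq_top, sup_comm]
      exact sup_le_sup_left hPN K
  · exact ⟨normalizer (P : Set G), hnorm, P.normalizer_sup_eq_top' hPN⟩

theorem exists_lt_sup_eq_of_prime_dvd_card [Finite G] {A : Subgroup G} [A.Normal]
    {H : Subgroup G} (hpH : p ∣ Nat.card H) (hpA : ¬ p ∣ A.relIndex H) :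
    ∃ K < H, K ⊔ A = H ⊔ A := by
  set N := A.subgroupOf H
  have hpN : p ∣ Nat.card N := by
    rw [← N.card_mul_index] at hpH
    exact ((Nat.Prime.dvd_mul Fact.out).mp hpH).resolve_right hpA
  obtain ⟨K, hK, hKN⟩ := exists_ne_top_sup_eq_top_of_prime_dvd_card hpN hpA
  set L := K.map H.subtype
  have hLH : L < H := by
    simpa only [L, ← map_subtype_lt_map_subtype, ← MonoidHom.range_eq_map, range_subtype]
      using lt_top_iff_ne_top.mpr hK
  have hsupH : L ⊔ A ⊓ H = H := by
    rw [← subgroupOf_map_subtype, ← Subgroup.map_sup, hKN, ← MonoidHom.range_eq_map, range_subtype]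
  refine ⟨L, hLH, ?_⟩
  calc L ⊔ A = L ⊔ (A ⊓ H ⊔ A) := by rw [sup_of_le_right (inf_le_left : A ⊓ H ≤ A)]
    _ = H ⊔ A := by rw [← sup_assoc, hsupH]

end

/-- If `A` is a normal subgroup of a finite group `G`, `M` is a subgroup of
`G` containing `A`, and the order of `M/A` is a `π`-number, then there is a
subgroup `H` of `G` whose order is a `π`-number with `HA = M`. -/
theorem stmt_5 (π : Set ℕ) (G : Type*) [Group G] [Finite G]
    (A M : Subgroup G) (hA : A.Normal) (hAM : A ≤ M)
    (hMA : IsPiNumber π (A.subgroupOf M).index) :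
    ∃ H : Subgroup G, IsPiNumber π (Nat.card H) ∧ H ⊔ A = M := by
  obtain ⟨H, -, hHmin⟩ :=
    exists_minimal_le_of_wellFoundedLT (fun H : Subgroup G => H ⊔ A = M) M (sup_of_le_left hAM)
  refine ⟨H, fun p hp hpH => by_contra fun hpπ => ?_, hHmin.prop⟩
  have : Fact p.Prime := ⟨hp⟩
  have hindex : A.relIndex H = (A.subgroupOf M).index := by
    rw [← Subgroup.relIndex, ← hHmin.prop, Subgroup.relIndex_sup_right]
  obtain ⟨K, hKH, hKA⟩ :=
    exists_lt_sup_eq_of_prime_dvd_card hpH fun h => hpπ (hMA p hp (hindex ▸ h))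
  exact hHmin.not_prop_of_lt hKH (hKA.trans hHmin.prop)
end

section
/- Let π be a set of primes, G a finite group, and A a normal subgroup of G such that A satisfies E_π and every prime divisor of |G/A| lies in π. Let H be a π-Hall subgroup of A. Then there exists a π-Hall subgroup K of G with K ∩ A = H if and only if for every g ∈ G there exists a ∈ A with g⁻¹Hg = a⁻¹Ha (i.e., the A-conjugacy class of H coincides with its G-conjugacy class). -/
/-- `G` satisfies `E_π`: it possesses a `π`-Hall subgroup. -/
def EPi (π : Set ℕ) (G : Type*) [Group G] : Prop :=
  ∃ H : Subgroup G, IsHallPi π H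

/-- `G` satisfies `C_π`: it satisfies `E_π` and any two `π`-Hall subgroups
of `G` are conjugate in `G`. -/
def CPi (π : Set ℕ) (G : Type*) [Group G] : Prop :=
  EPi π G ∧ ∀ H K : Subgroup G, IsHallPi π H → IsHallPi π K → ∃ g : G, conjSub g H = K

/-- `G` satisfies `D_π`: it satisfies `C_π` and every `π`-subgroup of `G` is
contained in some `π`-Hall subgroup of `G`. -/
def DPi (π : Set ℕ) (G : Type*) [Group G] : Prop :=
  CPi π G ∧ ∀ K : Subgroup G, IsPiNumber π (Nat.card K) →
    ∃ H : Subgroup G, IsHallPi π H ∧ K ≤ H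

open Subgroup

theorem IsPiNumber.mul {π : Set ℕ} {m n : ℕ} (hm : IsPiNumber π m) (hn : IsPiNumber π n) :
    IsPiNumber π (m * n) :=
  fun p hp hdvd => (hp.dvd_mul.mp hdvd).elim (hm p hp) (hn p hp)

theorem IsPiNumber.coprime_of_forall_not_dvd {π : Set ℕ} {m n : ℕ} (hm : IsPiNumber π m)
    (hn : ∀ p ∈ π, p.Prime → ¬ p ∣ n) : n.Coprime m :=
  Nat.coprime_of_dvd fun p hp hpn hpm => hn p (hm p hp hpm) hp hpn

section Conjugation

variable {G : Type*} [Group G]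

theorem conjSub_eq_self_iff {g : G} {X : Subgroup G} :
    conjSub g X = X ↔ g ∈ normalizer (X : Set G) :=
  mem_normalizer_iff_map_conj_eq.symm

theorem conjSub_one (X : Subgroup G) : conjSub 1 X = X :=
  conjSub_eq_self_iff.mpr (one_mem _)

theorem conjSub_mul (g h : G) (X : Subgroup G) :
    conjSub (g * h) X = conjSub g (conjSub h X) := by
  rw [conjSub, conjSub, conjSub, map_map]
  congr 1
  ext x
  simp [mul_assoc]

theorem conjSub_eq_conjSub_iff {g a : G} {X : Subgroup G} :
    conjSub g X = conjSub a X ↔ a⁻¹ * g ∈ normalizer (X : Set G) := by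
  rw [← conjSub_eq_self_iff, conjSub_mul]
  constructor
  · intro h
    rw [h, ← conjSub_mul, inv_mul_cancel, conjSub_one]
  · intro h
    conv_rhs => rw [← h, ← conjSub_mul, mul_inv_cancel, conjSub_one]

theorem forall_exists_conjSub_eq_iff_normalizer_sup_eq_top {A : Subgroup G} [A.Normal]
    (X : Subgroup G) :
    (∀ g : G, ∃ a ∈ A, conjSub g⁻¹ X = conjSub a⁻¹ X) ↔ normalizer (X : Set G) ⊔ A = ⊤ := by
  simp only [conjSub_eq_conjSub_iff, inv_inv, eq_top_iff', mem_sup_of_normal_right]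
  refine forall_congr' fun g => ⟨?_, ?_⟩
  · rintro ⟨a, ha, hn⟩
    exact ⟨(a * g⁻¹)⁻¹, inv_mem hn, a, ha, by group⟩
  · rintro ⟨n, hn, a, ha, rfl⟩
    exact ⟨a, ha, by simpa [mul_assoc] using inv_mem hn⟩

end Conjugation

section Index

variable {G : Type*} [Group G]

theorem sup_eq_top_of_coprime_index {K A : Subgroup G} (h : K.index.Coprime A.index) :
    K ⊔ A = ⊤ :=
  index_eq_one.mp <|
    Nat.eq_one_of_dvd_coprimes h (index_dvd_of_le le_sup_left) (index_dvd_of_le le_sup_right)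

theorem relIndex_map_subtype {A : Subgroup G} (H : Subgroup A) :
    (H.map A.subtype).relIndex A = H.index := by
  rw [relIndex, subgroupOf, comap_map_eq_self_of_injective A.subtype_injective]

theorem index_eq_relIndex_inf_of_sup_eq_top [Finite G] {K A : Subgroup G} [A.Normal]
    (h : K ⊔ A = ⊤) : K.index = (K ⊓ A).relIndex A := by
  have hK := relIndex_mul_relIndex (K ⊓ A) K ⊤ inf_le_left le_top
  have hA := relIndex_mul_relIndex (K ⊓ A) A ⊤ inf_le_right le_top
  have hAK : A.relIndex ⊤ = (K ⊓ A).relIndex K := by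
    rw [← h, relIndex_sup_right, ← inf_relIndex_right A K, inf_comm]
  rw [relIndex_top_right] at hK hA hAK
  rw [hAK, ← hK] at hA
  have hne : (K ⊓ A).relIndex K ≠ 0 := index_ne_zero_of_finite (H := (K ⊓ A).subgroupOf K)
  exact Nat.eq_of_mul_eq_mul_left (Nat.pos_of_ne_zero hne) (by rw [← hA, mul_comm])

theorem isHallPi_of_inf_eq_of_sup_eq_top [Finite G] {π : Set ℕ} {A K : Subgroup G} [A.Normal]
    (hGA : IsPiNumber π A.index) {H : Subgroup A} (hH : IsHallPi π H)
    (hinf : K ⊓ A = H.map A.subtype) (hsup : K ⊔ A = ⊤) : IsHallPi π K := by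
  have hindex : K.index = H.index := by
    rw [index_eq_relIndex_inf_of_sup_eq_top hsup, hinf, relIndex_map_subtype]
  have hcard : Nat.card K = Nat.card H * A.index := by
    refine Nat.eq_of_mul_eq_mul_right (Nat.pos_of_ne_zero (index_ne_zero_of_finite (H := H))) ?_
    calc Nat.card K * H.index = Nat.card G := by rw [← hindex, card_mul_index]
      _ = Nat.card H * H.index * A.index := by rw [card_mul_index, card_mul_index]
      _ = Nat.card H * A.index * H.index := by ring
  exact ⟨hcard ▸ hH.1.mul hGA, hindex ▸ hH.2⟩

end Index

section Complement

variable {G : Type*} [Group G] [Finite G]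

theorem exists_inf_eq_sup_eq_top_of_coprime {H M : Subgroup G} [H.Normal] [hM : M.Normal]
    (hHM : H ≤ M) (hcop : (H.relIndex M).Coprime M.index) :
    ∃ K : Subgroup G, K ⊓ M = H ∧ K ⊔ M = ⊤ := by
  set f := QuotientGroup.mk' H
  have hf : Function.Surjective f := QuotientGroup.mk'_surjective H
  have hker : f.ker = H := QuotientGroup.ker_mk' H
  have hindex : (M.map f).index = M.index := index_map_eq M hf (by rwa [hker])
  have hcard : Nat.card (M.map f) = H.relIndex M := by
    refine Nat.eq_of_mul_eq_mul_right (Nat.pos_of_ne_zero (index_ne_zero_of_finite (H := M))) ?_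
    rw [relIndex_mul_index hHM, ← hindex, card_mul_index, index_eq_card]
  have : (M.map f).Normal := hM.map f hf
  obtain ⟨L, hL⟩ := exists_right_complement'_of_coprime (by rwa [hcard, hindex])
  refine ⟨L.comap f, le_antisymm ?_ (le_inf (hker.ge.trans (ker_le_comap f L)) hHM), ?_⟩
  · rintro x ⟨hxL, hxM⟩
    rw [← hker]
    exact mem_bot.mp (hL.disjoint.le_bot ⟨mem_map_of_mem f hxM, hxL⟩)
  · have hmap : (L.comap f ⊔ M).map f = ⊤ := by
      rw [Subgroup.map_sup, map_comap_eq_self_of_surjective hf, sup_comm, hL.sup_eq_top]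
    have hker_le : f.ker ≤ L.comap f ⊔ M := le_sup_of_le_right (hker.le.trans hHM)
    rw [← comap_map_eq_self hker_le, hmap, comap_top]

theorem exists_inf_eq_sup_eq_top_of_normalizer_sup_eq_top {A X : Subgroup G} [A.Normal]
    (hXA : X ≤ A) (hN : normalizer (X : Set G) ⊔ A = ⊤) (hcop : (X.relIndex A).Coprime A.index) :
    ∃ K : Subgroup G, K ⊓ A = X ∧ K ⊔ A = ⊤ := by
  set N := normalizer (X : Set G)
  have hXN : X ≤ N := le_normalizer
  have : (X.subgroupOf N).Normal := normal_in_normalizer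
  have hcopN : ((X.subgroupOf N).relIndex (A.subgroupOf N)).Coprime (A.subgroupOf N).index := by
    rw [← inf_subgroupOf_right A N, relIndex_subgroupOf inf_le_right, inf_subgroupOf_right]
    refine (hcop.coprime_dvd_left ?_).coprime_dvd_right (relIndex_dvd_index_of_normal A N)
    exact Dvd.intro _ (relIndex_mul_relIndex X (A ⊓ N) A (le_inf hXA hXN) inf_le_left)
  obtain ⟨K, hinf, hsup⟩ :=
    exists_inf_eq_sup_eq_top_of_coprime (fun x hx => hXA hx : X.subgroupOf N ≤ A.subgroupOf N)
      hcopN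
  replace hinf := congrArg (map N.subtype) hinf
  replace hsup := congrArg (map N.subtype) hsup
  rw [map_inf_eq _ _ _ N.subtype_injective, subgroupOf_map_subtype, subgroupOf_map_subtype,
    inf_of_le_left hXN, inf_comm A, ← inf_assoc, inf_of_le_left (map_subtype_le K)] at hinf
  rw [Subgroup.map_sup, subgroupOf_map_subtype, ← MonoidHom.range_eq_map, range_subtype] at hsup
  refine ⟨K.map N.subtype, hinf, ?_⟩
  have hNK : N ≤ K.map N.subtype ⊔ A :=
    calc N = K.map N.subtype ⊔ A ⊓ N := hsup.symm
      _ ≤ K.map N.subtype ⊔ A := sup_le_sup_left inf_le_left _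
  rw [eq_top_iff, ← hN]
  exact sup_le hNK le_sup_right

end Complement

theorem stmt_7_general (π : Set ℕ) (G : Type*) [Group G] [Finite G]
    (A : Subgroup G) (hA : A.Normal)
    (hGA : IsPiNumber π A.index)
    (H : Subgroup A) (hH : IsHallPi π H) :
    (∃ K : Subgroup G, IsHallPi π K ∧ K ⊓ A = H.map A.subtype) ↔
    (∀ g : G, ∃ a ∈ A,
      conjSub g⁻¹ (H.map A.subtype) = conjSub a⁻¹ (H.map A.subtype)) := by
  rw [forall_exists_conjSub_eq_iff_normalizer_sup_eq_top]
  constructor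
  · rintro ⟨K, hK, hinf⟩
    have hsup : K ⊔ A = ⊤ := sup_eq_top_of_coprime_index (hGA.coprime_of_forall_not_dvd hK.2)
    have hKN : K ≤ normalizer (H.map A.subtype : Set G) :=
      hinf ▸ (le_inf K.le_normalizer le_normalizer_of_normal).trans inf_normalizer_le_normalizer_inf
    exact top_le_iff.mp (hsup ▸ sup_le_sup_right hKN A)
  · intro hN
    have hcop : ((H.map A.subtype).relIndex A).Coprime A.index :=
      relIndex_map_subtype H ▸ hGA.coprime_of_forall_not_dvd hH.2
    obtain ⟨K, hinf, hsup⟩ :=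
      exists_inf_eq_sup_eq_top_of_normalizer_sup_eq_top (map_subtype_le H) hN hcop
    exact ⟨K, isHallPi_of_inf_eq_of_sup_eq_top hGA hH hinf hsup, hinf⟩

/-- Let `A` be a normal subgroup of a finite group `G` such that `A ∈ E_π` and
every prime divisor of `|G/A|` lies in `π`, and let `H` be a `π`-Hall subgroup
of `A`. Then `H = K ∩ A` for some `π`-Hall subgroup `K` of `G` if and only if
for every `g ∈ G` there is `a ∈ A` with `g⁻¹Hg = a⁻¹Ha`. -/
theorem stmt_7 (π : Set ℕ) (G : Type*) [Group G] [Finite G]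
    (A : Subgroup G) (hA : A.Normal) (hAE : EPi π A)
    (hGA : IsPiNumber π A.index)
    (H : Subgroup A) (hH : IsHallPi π H) :
    (∃ K : Subgroup G, IsHallPi π K ∧ K ⊓ A = H.map A.subtype) ↔
    (∀ g : G, ∃ a ∈ A,
      conjSub g⁻¹ (H.map A.subtype) = conjSub a⁻¹ (H.map A.subtype)) :=
  stmt_7_general π G A hA hGA H hH
end

section
/- Let π be a set of primes with 2 ∈ π and 3 ∈ π, let n ≥ 1, and suppose H is a π-Hall subgroup of the symmetric group Sym_n. Then the normalizer of H in Sym_n equals H. -/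
open Equiv Subgroup

theorem Subgroup.relIndex_dvd_index_of_normal_right {G : Type*} [Group G] [Finite G]
    (H K : Subgroup G) [K.Normal] : H.relIndex K ∣ H.index := by
  obtain ⟨m, hm⟩ : K.relIndex H ∣ K.index := by
    rw [← relIndex_sup_right]
    exact relIndex_dvd_index_of_le le_sup_right
  have hne : K.relIndex H ≠ 0 := index_ne_zero_of_finite
  have key : H.relIndex K * K.index = K.relIndex H * H.index := by
    have h := relIndex_inf_mul_relIndex H K ⊤
    rw [inf_top_eq, relIndex_top_right, relIndex_top_right] at h
    rw [h, ← relIndex_mul_index inf_le_left, inf_relIndex_left]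
  rw [hm, mul_left_comm, Nat.mul_left_cancel_iff (Nat.pos_of_ne_zero hne)] at key
  exact ⟨m, key.symm⟩

theorem Subgroup.normalizer_le_normalizer_inf_centralizer {G : Type*} [Group G]
    (H : Subgroup G) :
    normalizer (H : Set G) ≤ normalizer ((H ⊓ centralizer (H : Set G) : Subgroup G) : Set G) :=
  (le_inf le_rfl (le_normalizer_of_normal_subgroupOf (centralizer_le_normalizer _))).trans
    inf_normalizer_le_normalizer_inf

theorem IsPGroup.inf_centralizer_ne_bot {G : Type*} [Group G] {p : ℕ} [Fact p.Prime]
    {P : Subgroup G} (hP : IsPGroup p P) [Finite P] [Nontrivial P] :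
    P ⊓ centralizer (P : Set G) ≠ ⊥ := by
  have := hP.center_nontrivial
  obtain ⟨z, hz⟩ := exists_ne (1 : center P)
  refine ne_bot_iff_exists_ne_one.mpr ⟨⟨z, (z : P).2, fun g hg => ?_⟩, ?_⟩
  · exact congrArg Subtype.val (mem_center_iff.mp z.2 ⟨g, hg⟩)
  · exact fun h => hz (Subtype.ext (Subtype.ext (congrArg Subtype.val h :)))

theorem Sylow.exists_le_of_not_dvd_index {G : Type*} [Group G] [Finite G] {p : ℕ}
    [Fact p.Prime] {H : Subgroup G} (hH : ¬ p ∣ H.index) :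
    ∃ P : Sylow p G, (P : Subgroup G) ≤ H := by
  obtain ⟨P⟩ := (inferInstance : Nonempty (Sylow p H))
  have hidx : ¬ p ∣ (P.map H.subtype).index := by
    rw [index_map_subtype]
    exact Nat.Prime.not_dvd_mul Fact.out P.not_dvd_index hH
  exact ⟨(P.isPGroup'.map H.subtype).toSylow hidx, map_subtype_le _⟩

theorem Sylow.normalizer_eq_self_of_normalizer_le {G : Type*} [Group G] [Finite G] {p : ℕ}
    [Fact p.Prime] (P : Sylow p G) {H : Subgroup G} (hH : normalizer (P : Set G) ≤ H) :
    normalizer (H : Set G) = H := by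
  have hPN : (P : Subgroup G) ≤ normalizer (H : Set G) :=
    le_normalizer.trans (hH.trans le_normalizer)
  have hsup := Sylow.normalizer_sup_eq_top' (N := H.subgroupOf (normalizer (H : Set G)))
    (P.subtype hPN) (by rw [Sylow.coe_subtype]; exact subgroupOf_mono _ (le_normalizer.trans hH))
  rw [← (P.subtype hPN).coe_coe, Sylow.coe_subtype, ← subgroupOf_normalizer_eq hPN,
    P.coe_coe, sup_of_le_right (subgroupOf_mono _ hH), subgroupOf_eq_top] at hsup
  exact le_antisymm hsup le_normalizer

/-- Every element of order prime to `p` normalizing a Sylow `p`-subgroup is trivial. For finite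
`G` this says that the Sylow `p`-subgroups are self-normalizing (`normalizer_eq`), but unlike
self-normalization it is inherited by arbitrary direct products. -/
def SylowNormalizerPRegularFree (p : ℕ) (G : Type*) [Group G] : Prop :=
  ∀ P : Subgroup G, IsPGroup p P → ¬ p ∣ P.index →
    ∀ g ∈ normalizer (P : Set G), (orderOf g).Coprime p → g = 1

namespace SylowNormalizerPRegularFree

variable {p : ℕ} {G H : Type*} [Group G] [Group H]

theorem of_isPGroup (hG : IsPGroup p G) : SylowNormalizerPRegularFree p G := by
  intro _ _ _ g _ hg
  obtain ⟨k, hk⟩ := hG g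
  exact orderOf_eq_one_iff.mp ((hg.pow_right k).eq_one_of_dvd (orderOf_dvd_of_pow_eq_one hk))

theorem of_mulEquiv (e : G ≃* H) (hG : SylowNormalizerPRegularFree p G) :
    SylowNormalizerPRegularFree p H := by
  intro P hP hidx g hgN hg
  refine e.symm.injective ?_
  rw [map_one]
  refine hG (P.comap e.toMonoidHom) (hP.comap_of_injective _ e.injective)
    (by rwa [index_comap_of_surjective _ e.surjective]) _ ?_ (by rwa [MulEquiv.orderOf_eq])
  rw [← comap_normalizer_eq_of_surjective _ e.surjective]
  simpa using hgN

theorem pi {ι : Type*} {G : ι → Type*} [∀ i, Group (G i)]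
    (h : ∀ i, SylowNormalizerPRegularFree p (G i)) :
    SylowNormalizerPRegularFree p (∀ i, G i) := by
  classical
  intro P hP hidx g hgN hg
  funext i
  have hsurj : Function.Surjective (Pi.evalMonoidHom G i) :=
    fun x => ⟨Pi.mulSingle i x, by simp⟩
  exact h i (P.map (Pi.evalMonoidHom G i)) (hP.map _)
    (fun hd => hidx (hd.trans (index_map_dvd _ hsurj))) (g i)
    (le_normalizer_map _ (mem_map_of_mem _ hgN))
    (hg.coprime_dvd_left (orderOf_map_dvd (Pi.evalMonoidHom G i) g))

theorem eq_one_of_mem {W : Subgroup G} (hW : SylowNormalizerPRegularFree p W) {P : Subgroup G}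
    (hP : IsPGroup p P) (hidx : ¬ p ∣ P.relIndex W) {g : G} (hgW : g ∈ W)
    (hgN : g ∈ normalizer (P : Set G)) (hg : (orderOf g).Coprime p) : g = 1 := by
  have := hW (P.subgroupOf W) hP.comap_subtype hidx ⟨g, hgW⟩ (le_normalizer_comap _ hgN)
    (by rwa [orderOf_mk])
  simpa using congrArg Subtype.val this

theorem of_ker_of_range [Finite G] (f : G →* H) (hker : SylowNormalizerPRegularFree p f.ker)
    (hrange : SylowNormalizerPRegularFree p f.range) : SylowNormalizerPRegularFree p G := by
  intro P hP hidx g hgN hg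
  have hgK : f.rangeRestrict g = 1 :=
    hrange (P.map f.rangeRestrict) (hP.map _)
      (fun hd => hidx (hd.trans (index_map_dvd _ f.rangeRestrict_surjective))) _
      (le_normalizer_map _ (mem_map_of_mem _ hgN)) (hg.coprime_dvd_left (orderOf_map_dvd _ g))
  exact hker.eq_one_of_mem hP
    (fun hd => hidx (hd.trans (relIndex_dvd_index_of_normal_right _ _)))
    (by rw [MonoidHom.mem_ker, ← f.coe_rangeRestrict, hgK]; rfl) hgN hg

theorem normalizer_eq [Finite G] [hp : Fact p.Prime] (hG : SylowNormalizerPRegularFree p G)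
    (P : Sylow p G) : normalizer (P : Set G) = P := by
  refine le_antisymm (fun x hx => ?_) le_normalizer
  have hpart : x ^ p ^ (orderOf x).factorization p = 1 :=
    hG P P.isPGroup' P.not_dvd_index _ (pow_mem hx _) (by
      rw [orderOf_pow_of_dvd (pow_ne_zero _ hp.out.ne_zero) (Nat.ordProj_dvd _ _)]
      exact (Nat.coprime_ordCompl hp.out (orderOf_pos x).ne').symm)
  obtain ⟨k, -, hk⟩ := (Nat.dvd_prime_pow hp.out).mp (orderOf_dvd_of_pow_eq_one hpart)
  have hx' : IsPGroup p (zpowers x) := IsPGroup.of_card (by rw [Nat.card_zpowers, hk])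
  have hsup : (P : Subgroup G) ⊔ zpowers x = P :=
    P.is_maximal' (P.isPGroup'.to_sup_of_normal_left' hx' (zpowers_le.mpr hx)) le_sup_left
  exact hsup ▸ mem_sup_right (mem_zpowers x)

end SylowNormalizerPRegularFree

namespace Equiv.Perm

open Function MulAction

universe u

variable {α : Type u} {β : Type*} {p : ℕ}

def fiberwise (f : α → β) : Subgroup (Perm α) where
  carrier := {σ | ∀ x, f (σ x) = f x}
  one_mem' _ := rfl
  mul_mem' ha hb x := (ha _).trans (hb x)
  inv_mem' {σ} h x := by simpa using (h (σ⁻¹ x)).symm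

theorem mem_fiberwise {f : α → β} {σ : Perm α} : σ ∈ fiberwise f ↔ ∀ x, f (σ x) = f x :=
  Iff.rfl

def ofFiberPerms (f : α → β) : (∀ b, Perm {x // f x = b}) →* Perm α :=
  (sigmaFiberEquiv f).permCongrHom.toMonoidHom.comp (sigmaCongrRightHom _)

theorem ofFiberPerms_injective (f : α → β) : Injective (ofFiberPerms f) :=
  (sigmaFiberEquiv f).permCongrHom.injective.comp sigmaCongrRightHom_injective

theorem range_ofFiberPerms (f : α → β) : (ofFiberPerms f).range = fiberwise f := by
  refine le_antisymm ?_ fun σ hσ => ?_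
  · rintro _ ⟨π, rfl⟩ x
    exact (π (f x) ⟨x, rfl⟩).2
  · refine ⟨fun b => σ.subtypePerm fun x => ?_, ext fun x => rfl⟩
    rw [hσ x]

noncomputable def fiberwiseEquiv (f : α → β) : (∀ b, Perm {x // f x = b}) ≃* fiberwise f :=
  (MonoidHom.ofInjective (ofFiberPerms_injective f)).trans
    (MulEquiv.subgroupCongr (range_ofFiberPerms f))

def fiberPermuting (q : α → β) : Subgroup (Perm α) where
  carrier := {σ | ∃ τ : Perm β, Semiconj q σ τ}
  one_mem' := ⟨1, fun _ => rfl⟩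
  mul_mem' := by
    rintro σ σ' ⟨τ, hτ⟩ ⟨τ', hτ'⟩
    exact ⟨τ * τ', hτ.comp_right hτ'⟩
  inv_mem' := by
    rintro σ ⟨τ, hτ⟩
    exact ⟨τ⁻¹, fun x => by rw [Perm.eq_inv_iff_eq, ← hτ]; simp⟩

theorem fiberwise_le_fiberPermuting (q : α → β) : fiberwise q ≤ fiberPermuting q :=
  fun _ h => ⟨1, h⟩

theorem eq_of_semiconj {q : α → β} (hq : Surjective q) {σ : Perm α} {τ τ' : Perm β}
    (h : Semiconj q σ τ) (h' : Semiconj q σ τ') : τ = τ' :=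
  ext fun b => by obtain ⟨x, rfl⟩ := hq b; rw [← h, h']

noncomputable def descend {q : α → β} (hq : Surjective q) : fiberPermuting q →* Perm β where
  toFun σ := σ.2.choose
  map_one' := eq_of_semiconj hq (1 : fiberPermuting q).2.choose_spec fun _ => rfl
  map_mul' σ σ' := eq_of_semiconj hq (σ * σ').2.choose_spec <|
    σ.2.choose_spec.comp_right σ'.2.choose_spec

theorem semiconj_descend {q : α → β} (hq : Surjective q) (σ : fiberPermuting q) :
    Semiconj q σ (descend hq σ) :=
  σ.2.choose_spec

theorem ker_descend {q : α → β} (hq : Surjective q) :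
    (descend hq).ker = (fiberwise q).subgroupOf (fiberPermuting q) := by
  ext σ
  rw [MonoidHom.mem_ker, mem_subgroupOf, mem_fiberwise]
  exact ⟨fun h x => by rw [semiconj_descend hq, h]; rfl,
    fun h => eq_of_semiconj hq (τ' := 1) (semiconj_descend hq σ) h⟩

theorem range_descend [Finite α] {q : α → β} (hq : Surjective q) :
    (descend hq).range = fiberwise fun b => Nat.card {x // q x = b} := by
  refine le_antisymm ?_ fun τ hτ => ?_
  · rintro _ ⟨σ, rfl⟩ b
    refine (Nat.card_congr ((σ : Perm α).subtypeEquiv fun x => ?_)).symm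
    rw [semiconj_descend hq, (descend hq σ).injective.eq_iff]
  · have ψ b : {x // q x = b} ≃ {x // q x = τ b} := (Finite.card_eq.mp (hτ b).symm).some
    let σ : Perm α := (sigmaFiberEquiv q).permCongr (.sigmaCongr τ ψ)
    have hσ : Semiconj q σ τ := fun x => (ψ (q x) ⟨x, rfl⟩).2
    exact ⟨⟨σ, τ, hσ⟩, eq_of_semiconj hq (semiconj_descend hq ⟨σ, τ, hσ⟩) hσ⟩

theorem sylowNormalizerPRegularFree_fiberwise (f : α → β)
    (h : ∀ b, SylowNormalizerPRegularFree p (Perm {x // f x = b})) :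
    SylowNormalizerPRegularFree p (fiberwise f) :=
  (SylowNormalizerPRegularFree.pi h).of_mulEquiv (fiberwiseEquiv f)

theorem sylowNormalizerPRegularFree_fiberPermuting [Finite α] {q : α → β} (hq : Surjective q)
    (hfiber : ∀ b, SylowNormalizerPRegularFree p (Perm {x // q x = b}))
    (hsize : ∀ n, SylowNormalizerPRegularFree p (Perm {b // Nat.card {x // q x = b} = n})) :
    SylowNormalizerPRegularFree p (fiberPermuting q) := by
  refine .of_ker_of_range (descend hq) ?_ ?_
  · refine (sylowNormalizerPRegularFree_fiberwise q hfiber).of_mulEquiv ?_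
    exact (subgroupOfEquivOfLe (fiberwise_le_fiberPermuting q)).symm.trans
      (MulEquiv.subgroupCongr (ker_descend hq).symm)
  · exact (sylowNormalizerPRegularFree_fiberwise _ hsize).of_mulEquiv
      (MulEquiv.subgroupCongr (range_descend hq).symm)

theorem mem_orbit_apply_of_mem_normalizer {Z : Subgroup (Perm α)} {σ : Perm α}
    (hσ : σ ∈ normalizer (Z : Set (Perm α))) {x y : α} (h : x ∈ orbit Z y) :
    σ x ∈ orbit Z (σ y) := by
  obtain ⟨z, rfl⟩ := h
  exact ⟨⟨σ * z * σ⁻¹, (mem_normalizer_iff.mp hσ z).mp z.2⟩, by simp [Subgroup.smul_def]⟩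

theorem normalizer_le_fiberPermuting (Z : Subgroup (Perm α)) :
    normalizer (Z : Set (Perm α)) ≤ fiberPermuting (Quotient.mk (orbitRel Z α)) := by
  intro σ hσ
  refine ⟨Quotient.congr σ fun x y => ?_, fun x => rfl⟩
  simp only [orbitRel_apply]
  refine ⟨mem_orbit_apply_of_mem_normalizer hσ, fun h => ?_⟩
  simpa using mem_orbit_apply_of_mem_normalizer (inv_mem hσ) h

theorem card_orbitRel_quotient_lt [Finite α] {Z : Subgroup (Perm α)} (hZ : Z ≠ ⊥) :
    Nat.card (orbitRel.Quotient Z α) < Nat.card α := by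
  obtain ⟨z, hzZ, hz⟩ := Z.bot_or_exists_ne_one.resolve_left hZ
  obtain ⟨x, hx⟩ : ∃ x, z x ≠ x := not_forall.mp fun h => hz (Perm.ext h)
  have := Fintype.ofFinite α
  have := Fintype.ofFinite (orbitRel.Quotient Z α)
  simp only [Nat.card_eq_fintype_card]
  refine Fintype.card_lt_of_surjective_not_injective _ Quotient.mk_surjective
    fun hinj => hx (hinj ?_)
  exact Quotient.sound ⟨⟨z, hzZ⟩, rfl⟩

theorem card_eq_of_isPretransitive [Nonempty α] {P Z : Subgroup (Perm α)} (hZP : Z ≤ P)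
    (hZc : Z ≤ centralizer (P : Set (Perm α))) [IsPretransitive Z α] :
    Nat.card P = Nat.card α := by
  obtain ⟨x₀⟩ := ‹Nonempty α›
  refine Nat.card_eq_of_bijective (fun σ : P => (σ : Perm α) x₀) ⟨fun σ τ h => ?_, fun y => ?_⟩
  · have hcomm (π : P) (z : Z) : (π : Perm α) ((z : Perm α) x₀) = (z : Perm α) ((π : Perm α) x₀) :=
      congrArg (· x₀) (mem_centralizer_iff.mp (hZc z.2) π π.2)
    refine Subtype.ext (ext fun y => ?_)
    obtain ⟨z, rfl⟩ := exists_smul_eq Z x₀ y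
    simp only [Subgroup.smul_def, Perm.smul_def, hcomm]
    exact congrArg _ h
  · obtain ⟨z, rfl⟩ := exists_smul_eq Z x₀ y
    exact ⟨⟨z, hZP z.2⟩, rfl⟩

theorem two_dvd_index_of_card_eq [Finite α] (hα : 3 ≤ Nat.card α) {P : Subgroup (Perm α)}
    (hP : Nat.card P = Nat.card α) : 2 ∣ P.index := by
  have h := P.card_mul_index
  rw [hP, Nat.card_perm, ← Nat.mul_factorial_pred (by omega : Nat.card α ≠ 0),
    Nat.mul_left_cancel_iff (by omega)] at h
  exact h ▸ Nat.dvd_factorial two_pos (by omega)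

theorem sylowNormalizerPRegularFree_two_of_card_le_two [Finite α] (hα : Nat.card α ≤ 2) :
    SylowNormalizerPRegularFree 2 (Perm α) := by
  refine .of_isPGroup (IsPGroup.of_card (n := Nat.card α - 1) ?_)
  rw [Nat.card_perm]
  interval_cases Nat.card α <;> rfl

theorem sylowNormalizerPRegularFree_two_of_three_le [Finite α] (hα : 3 ≤ Nat.card α)
    (ih : ∀ (β : Type u) [Finite β], Nat.card β < Nat.card α →
      SylowNormalizerPRegularFree 2 (Perm β)) :
    SylowNormalizerPRegularFree 2 (Perm α) := by
  have : Fact (Nat.Prime 2) := ⟨Nat.prime_two⟩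
  intro P hP hidx g hgN hg
  set Z := P ⊓ centralizer (P : Set (Perm α))
  have : Nontrivial P := (nontrivial_iff_ne_bot P).mpr <|
    (hP.toSylow hidx).ne_bot_of_dvd_card <| by
      rw [Nat.card_perm]
      exact Nat.dvd_factorial two_pos (by omega)
  rcases subsingleton_or_nontrivial (orbitRel.Quotient Z α) with hZ | hZ
  · have := (pretransitive_iff_subsingleton_quotient Z α).mpr hZ
    have : Nonempty α := (Nat.card_pos_iff.mp (by omega)).1
    exact absurd (two_dvd_index_of_card_eq hα
      (card_eq_of_isPretransitive (Z := Z) inf_le_left inf_le_right)) hidx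
  · have hfiber (b : orbitRel.Quotient Z α) :
        Nat.card {x // Quotient.mk (orbitRel Z α) x = b} < Nat.card α := by
      obtain ⟨b', hb'⟩ := exists_ne b
      obtain ⟨x, rfl⟩ := Quotient.mk_surjective b'
      exact Finite.card_subtype_lt hb'
    have hquot := card_orbitRel_quotient_lt hP.inf_centralizer_ne_bot
    have hW := sylowNormalizerPRegularFree_fiberPermuting Quotient.mk_surjective
      (fun b => ih _ (hfiber b)) (fun _ => ih _ ((Finite.card_subtype_le _).trans_lt hquot))
    have hNW := P.normalizer_le_normalizer_inf_centralizer.trans (normalizer_le_fiberPermuting Z)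
    exact hW.eq_one_of_mem hP
      (fun hd => hidx (hd.trans (relIndex_dvd_index_of_le (le_normalizer.trans hNW))))
      (hNW hgN) hgN hg

theorem sylowNormalizerPRegularFree_two (α : Type u) [Finite α] :
    SylowNormalizerPRegularFree 2 (Perm α) := by
  induction hn : Nat.card α using Nat.strong_induction_on generalizing α with
  | _ n ih =>
    subst hn
    rcases le_or_gt (Nat.card α) 2 with hα | hα
    · exact sylowNormalizerPRegularFree_two_of_card_le_two hα
    · exact sylowNormalizerPRegularFree_two_of_three_le hα fun β _ hβ => ih _ hβ β rfl

end Equiv.Perm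

theorem stmt_9_general (π : Set ℕ) (h2 : 2 ∈ π) (n : ℕ)
    (H : Subgroup (Equiv.Perm (Fin n))) (hH : IsHallPi π H) :
    Subgroup.normalizer (H : Set (Equiv.Perm (Fin n))) = H := by
  have : Fact (Nat.Prime 2) := ⟨Nat.prime_two⟩
  obtain ⟨P, hPH⟩ := Sylow.exists_le_of_not_dvd_index (hH.2 2 h2 Nat.prime_two)
  refine P.normalizer_eq_self_of_normalizer_le ?_
  rwa [(Equiv.Perm.sylowNormalizerPRegularFree_two _).normalizer_eq P]

/-- If `2, 3 ∈ π`, `n ≥ 1`, and `H` is a `π`-Hall subgroup of the symmetric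
group `Sym_n`, then the normalizer of `H` in `Sym_n` equals `H`. -/
theorem stmt_9 (π : Set ℕ) (h2 : 2 ∈ π) (h3 : 3 ∈ π) (n : ℕ) (hn : 1 ≤ n)
    (H : Subgroup (Equiv.Perm (Fin n))) (hH : IsHallPi π H) :
    Subgroup.normalizer (H : Set (Equiv.Perm (Fin n))) = H :=
  stmt_9_general π h2 n H hH
end

section
/- Let r and p be distinct odd primes, let q = p^α for some integer α ≥ 1, and let m be an integer with m ≥ (r+1)/2. Then the r-part of the product (q²−1)(q⁴−1)⋯(q^{2(m−1)}−1) is strictly greater than the r-part of m!. -/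
/-!
Write `e = (r - 1) / 2`. By Fermat, `r ∣ b - 1` for `b = q ^ (2e) = q ^ (r - 1)`, so by lifting the
exponent `v_r(b^j - 1) ≥ 1 + v_r(j)`. The factors with `i = e j`, `1 ≤ j ≤ N = ⌊(m - 1)/e⌋`, therefore
contribute at least `N + v_r(N!)` to the `r`-adic valuation of the product, whereas Legendre gives
`v_r(m!) = k + v_r(k!)` with `k = ⌊m/r⌋`. The bound `m ≥ (r + 1)/2` is exactly what makes `k < N`.
-/

/-- The `p`-part of a positive integer `m`: the largest power of `p`
dividing `m`. -/
def pPart (p m : ℕ) : ℕ := p ^ m.factorization p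

open Finset Nat

theorem padicValNat_finset_prod {ι : Type*} {p : ℕ} [Fact p.Prime] (s : Finset ι) {f : ι → ℕ}
    (hf : ∀ i ∈ s, f i ≠ 0) :
    padicValNat p (∏ i ∈ s, f i) = ∑ i ∈ s, padicValNat p (f i) := by
  classical
  induction s using Finset.induction_on with
  | empty => simp
  | insert a s ha ih =>
    have hs : ∀ i ∈ s, f i ≠ 0 := fun i hi => hf i (mem_insert_of_mem hi)
    rw [prod_insert ha, sum_insert ha, padicValNat.mul (hf a (mem_insert_self a s))
      (prod_ne_zero_iff.mpr hs), ih hs]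

theorem padicValNat_le_of_dvd {p a b : ℕ} [Fact p.Prime] (hb : b ≠ 0) (h : a ∣ b) :
    padicValNat p a ≤ padicValNat p b :=
  (padicValNat_dvd_iff_le hb).mp (pow_padicValNat_dvd.trans h)

theorem padicValNat_factorial_eq_div_add {p : ℕ} [Fact p.Prime] (n : ℕ) :
    padicValNat p n ! = n / p + padicValNat p (n / p)! := by
  rw [← padicValNat_mul_div_factorial, padicValNat_factorial_mul, add_comm]

theorem Nat.Prime.dvd_pow_pred_sub_one {r q : ℕ} (hr : r.Prime) (hrq : ¬r ∣ q) :
    r ∣ q ^ (r - 1) - 1 := by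
  have hq : 0 < q := Nat.pos_of_ne_zero fun h => hrq (h ▸ dvd_zero r)
  have h := Nat.ModEq.pow_totient (Nat.coprime_comm.mp ((hr.coprime_iff_not_dvd).mpr hrq))
  rw [Nat.totient_prime hr] at h
  exact (Nat.modEq_iff_dvd' (Nat.one_le_pow _ _ hq)).mp h.symm

theorem succ_padicValNat_le_padicValNat_pow_sub_one {r a j : ℕ} [hr : Fact r.Prime] (hodd : Odd r)
    (ha : 1 < a) (hra : r ∣ a - 1) (hj : j ≠ 0) :
    padicValNat r j + 1 ≤ padicValNat r (a ^ j - 1) := by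
  have hrna : ¬r ∣ a := fun h =>
    hr.out.not_dvd_one (by simpa [show a - (a - 1) = 1 by omega] using Nat.dvd_sub h hra)
  have hlte := padicValNat.pow_sub_pow (x := a) (y := 1) hodd ha (by simpa using hra) hrna hj
  rw [one_pow] at hlte
  have := one_le_padicValNat_of_dvd (by omega) hra
  omega

theorem padicValNat_factorial_add_le_prod_pow_sub_one {r a : ℕ} [Fact r.Prime] (hodd : Odd r)
    (ha : 1 < a) (hra : r ∣ a - 1) (n : ℕ) :
    padicValNat r n ! + n ≤ padicValNat r (∏ j ∈ Icc 1 n, (a ^ j - 1)) := by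
  have hj : ∀ j ∈ Icc 1 n, j ≠ 0 := fun j hj => by have := (mem_Icc.mp hj).1; omega
  have hterm : ∀ j ∈ Icc 1 n, a ^ j - 1 ≠ 0 := fun j hj' => by
    have := Nat.one_lt_pow (hj j hj') ha; omega
  rw [← prod_Ico_id_eq_factorial, Ico_add_one_right_eq_Icc, padicValNat_finset_prod _ hj,
    padicValNat_finset_prod _ hterm]
  calc ∑ j ∈ Icc 1 n, padicValNat r j + n = ∑ j ∈ Icc 1 n, (padicValNat r j + 1) := by
        simp [sum_add_distrib]
    _ ≤ _ := sum_le_sum fun j hj' =>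
      succ_padicValNat_le_padicValNat_pow_sub_one hodd ha hra (hj j hj')

theorem prod_Icc_mul_dvd_prod_Icc {M : Type*} [CommMonoid M] (f : ℕ → M) {e : ℕ} (he : 0 < e)
    (n : ℕ) : ∏ j ∈ Icc 1 (n / e), f (e * j) ∣ ∏ i ∈ Icc 1 n, f i := by
  rw [← prod_image fun x _ y _ h => Nat.eq_of_mul_eq_mul_left he h]
  refine prod_dvd_prod_of_subset _ _ f fun i hi => ?_
  obtain ⟨j, hj, rfl⟩ := mem_image.mp hi
  obtain ⟨hj1, hjn⟩ := mem_Icc.mp hj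
  exact mem_Icc.mpr ⟨Nat.mul_pos he hj1,
    (Nat.mul_le_mul_left e hjn).trans (Nat.mul_div_le n e)⟩

theorem div_lt_pred_div_half_pred {r m : ℕ} (hr : 3 ≤ r) (hodd : Odd r) (hm : (r + 1) / 2 ≤ m) :
    m / r < (m - 1) / ((r - 1) / 2) := by
  obtain ⟨s, rfl⟩ := hodd
  have hs : (2 * s + 1 - 1) / 2 = s := by omega
  have hs1 : 0 < s := by omega
  rw [hs, Nat.lt_iff_add_one_le, Nat.le_div_iff_mul_le hs1]
  have hk := Nat.div_mul_le_self m (2 * s + 1)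
  rcases Nat.eq_zero_or_pos (m / (2 * s + 1)) with hk0 | hk1
  · rw [hk0]; omega
  · generalize m / (2 * s + 1) = k at hk hk1
    refine Nat.le_sub_of_add_le ?_
    nlinarith [Nat.mul_le_mul_right (s + 1) hk1]

theorem stmt_12_general (r p : ℕ) (hr : r.Prime) (hp : p.Prime)
    (hrodd : Odd r) (hrp : r ≠ p)
    (α : ℕ) (hα : 1 ≤ α) (q : ℕ) (hq : q = p ^ α)
    (m : ℕ) (hm : (r + 1) / 2 ≤ m) :
    pPart r (Nat.factorial m) <
      pPart r (∏ i ∈ Finset.Icc 1 (m - 1), (q ^ (2 * i) - 1)) := by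
  have := Fact.mk hr
  have hr3 : 3 ≤ r := by have := hr.two_le; rcases hrodd with ⟨s, rfl⟩; omega
  have hq1 : 1 < q := hq ▸ Nat.one_lt_pow (by omega) hp.one_lt
  have hrq : ¬r ∣ q := fun h =>
    hrp ((Nat.prime_dvd_prime_iff_eq hr hp).mp (hr.dvd_of_dvd_pow (hq ▸ h)))
  set e := (r - 1) / 2
  have hb : 1 < q ^ (2 * e) := Nat.one_lt_pow (by omega) hq1
  have hrb : r ∣ q ^ (2 * e) - 1 := by
    rw [show 2 * e = r - 1 by rcases hrodd with ⟨s, rfl⟩; omega]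
    exact hr.dvd_pow_pred_sub_one hrq
  have hP : ∏ i ∈ Icc 1 (m - 1), (q ^ (2 * i) - 1) ≠ 0 := prod_ne_zero_iff.mpr fun i hi => by
    have := Nat.one_lt_pow (by have := (mem_Icc.mp hi).1; omega : 2 * i ≠ 0) hq1; omega
  have hmN := div_lt_pred_div_half_pred hr3 hrodd hm
  unfold pPart
  rw [factorization_def _ hr, factorization_def _ hr]
  refine Nat.pow_lt_pow_right hr.one_lt ?_
  calc padicValNat r m ! = m / r + padicValNat r (m / r)! := padicValNat_factorial_eq_div_add m
    _ < (m - 1) / e + padicValNat r ((m - 1) / e)! :=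
      add_lt_add_of_lt_of_le hmN
        (padicValNat_le_of_dvd (factorial_ne_zero _) (factorial_dvd_factorial hmN.le))
    _ ≤ padicValNat r (∏ j ∈ Icc 1 ((m - 1) / e), ((q ^ (2 * e)) ^ j - 1)) := by
      rw [add_comm]; exact padicValNat_factorial_add_le_prod_pow_sub_one hrodd hb hrb _
    _ ≤ padicValNat r (∏ i ∈ Icc 1 (m - 1), (q ^ (2 * i) - 1)) := by
      refine padicValNat_le_of_dvd hP ?_
      simpa only [← pow_mul, mul_assoc] using
        prod_Icc_mul_dvd_prod_Icc (fun i => q ^ (2 * i) - 1) (by omega : 0 < e) (m - 1)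

/-- If `r, p` are distinct odd primes, `q = p^α` with `α ≥ 1`, and
`m ≥ (r+1)/2`, then the `r`-part of `(q²−1)(q⁴−1)⋯(q^{2(m−1)}−1)` is strictly
greater than the `r`-part of `m!`. -/
theorem stmt_12 (r p : ℕ) (hr : r.Prime) (hp : p.Prime)
    (hrodd : Odd r) (hpodd : Odd p) (hrp : r ≠ p)
    (α : ℕ) (hα : 1 ≤ α) (q : ℕ) (hq : q = p ^ α)
    (m : ℕ) (hm : (r + 1) / 2 ≤ m) :
    pPart r (Nat.factorial m) <
      pPart r (∏ i ∈ Finset.Icc 1 (m - 1), (q ^ (2 * i) - 1)) :=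
  stmt_12_general r p hr hp hrodd hrp α hα q hq m hm
end
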